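/- For any unit spacelike vector X (with respect to g of Lemma 2.1 with R² the constant curvature tensor), the Jacobi operator J(X) satisfies: J(X)X = 0, J(X)V_a = 0 for all a, and the image of J(X)² equals the span of the V_b for which the orthogonally-normalized U-component conditions hold; in particular rank(J(X)) = 2(s-1) and rank(J(X)²) = s-1, independent of X. -/

import Mathlib

open scoped BigOperators

/-- Basis of `ℝ^{3s}`: `(0, a) = U_a`, `(1, a) = V_a`, `(2, a) = T_a`. -/
abbrev BasisIdx (s : ℕ) := Fin 3 × Fin s

/-- The basis vectors `U_a`, `V_a`, `T_a` of `ℝ^{3s}`. -/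
def Uvec {s : ℕ} (a : Fin s) : BasisIdx s → ℝ := Pi.single ((0 : Fin 3), a) 1
def Vvec {s : ℕ} (a : Fin s) : BasisIdx s → ℝ := Pi.single ((1 : Fin 3), a) 1
def Tvec {s : ℕ} (a : Fin s) : BasisIdx s → ℝ := Pi.single ((2 : Fin 3), a) 1

/-- Components of the metric of Lemma 2.1: `g(U_a,U_b) = g_{ab}`,
`g(U_a,V_b) = g(V_b,U_a) = δ_{ab}`, `g(T_a,T_b) = -δ_{ab}`, all else zero. -/
def Gmat {s : ℕ} (gm : Fin s → Fin s → ℝ) : BasisIdx s → BasisIdx s → ℝ :=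
  fun x y =>
    if x.1 = 0 ∧ y.1 = 0 then gm x.2 y.2
    else if (x.1 = 0 ∧ y.1 = 1) ∨ (x.1 = 1 ∧ y.1 = 0) then (if x.2 = y.2 then 1 else 0)
    else if x.1 = 2 ∧ y.1 = 2 then (if x.2 = y.2 then (-1 : ℝ) else 0)
    else 0

/-- The bilinear form determined by the metric components. -/
def gBil {s : ℕ} (gm : Fin s → Fin s → ℝ) (X Y : BasisIdx s → ℝ) : ℝ :=
  ∑ p, ∑ q, X p * Gmat gm p q * Y q

/-- The quadrilinear extension of a component tensor to vectors. -/
def ext {s : ℕ} (F : BasisIdx s → BasisIdx s → BasisIdx s → BasisIdx s → ℝ)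
    (x y z w : BasisIdx s → ℝ) : ℝ :=
  ∑ p, ∑ q, ∑ r, ∑ t, x p * y q * z r * w t * F p q r t

/-- A (component-level) algebraic curvature tensor. -/
def IsACT {ι : Type*} (F : ι → ι → ι → ι → ℝ) : Prop :=
  (∀ x y z w, F x y z w = - F y x z w) ∧
  (∀ x y z w, F x y z w = F z w x y) ∧
  (∀ x y z w, F x y z w + F y z x w + F z x y w = 0)

/-- `R²_{abcd} = δ_{ad}δ_{bc} - δ_{ac}δ_{bd}`, constant sectional curvature `+1`. -/
def R2const (s : ℕ) : Fin s → Fin s → Fin s → Fin s → ℝ :=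
  fun a b c d =>
    (if a = d then (1 : ℝ) else 0) * (if b = c then (1 : ℝ) else 0) -
      (if a = c then (1 : ℝ) else 0) * (if b = d then (1 : ℝ) else 0)

/-- The tensor of Lemma 2.1: `R(U_a,U_b,U_c,U_d) = R¹_{abcd}`, components with
exactly one `T` index equal `R²_{abcd}` (replacing the `T` index by the
corresponding `U` index), all else zero. -/
def bigR {s : ℕ} (R1 R2 : Fin s → Fin s → Fin s → Fin s → ℝ) :
    BasisIdx s → BasisIdx s → BasisIdx s → BasisIdx s → ℝ :=
  fun x y z w =>
    if x.1 = 0 ∧ y.1 = 0 ∧ z.1 = 0 ∧ w.1 = 0 then R1 x.2 y.2 z.2 w.2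
    else if (x.1 = 2 ∧ y.1 = 0 ∧ z.1 = 0 ∧ w.1 = 0) ∨ (x.1 = 0 ∧ y.1 = 2 ∧ z.1 = 0 ∧ w.1 = 0) ∨
            (x.1 = 0 ∧ y.1 = 0 ∧ z.1 = 2 ∧ w.1 = 0) ∨ (x.1 = 0 ∧ y.1 = 0 ∧ z.1 = 0 ∧ w.1 = 2)
      then R2 x.2 y.2 z.2 w.2
    else 0

/-!
Write `u`, `t` for the `U`- and `T`-components of `X` and `P = |u|² I - u uᵀ`. Pairing `J(X) y`
with `V_d`, `T_d`, `U_d` shows that `J(X)` only sees the `U`- and `T`-components `(z, w)` of `y`,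
and sends them to the vector with `V`-component `z A + w P`, `T`-component `-z P` and no
`U`-component, where `A` collects the `R¹`-term. Since `g(X, X) = 1` forces `u ≠ 0`, the kernel of
`P` is `ℝ u`, and antisymmetry of `R¹` gives `u A + t P = 0`. Hence `J(X) X = 0`, the kernel of
`(z, w) ↦ (z A + w P, -z P)` is spanned by `(0, u)` and `(u, t)`, and `rank J(X) = 2s - 2`.
Finally `J(X)² y` is the `V`-vector `-z P P = -|u|² z P`, so `rank J(X)² = rank P = s - 1`.
-/

namespace JacobiOperator

open Module LinearMap Submodule Function
open Matrix (of vecMulVec)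
open scoped Matrix

variable {s : ℕ}

lemma curry_Uvec (a : Fin s) :
    curry (Uvec a) 0 = Pi.single a 1 ∧ curry (Uvec a) 1 = 0 ∧ curry (Uvec a) 2 = 0 := by
  refine ⟨?_, ?_, ?_⟩ <;> ext b <;> simp [Uvec, Pi.single_apply]

lemma curry_Vvec (a : Fin s) :
    curry (Vvec a) 0 = 0 ∧ curry (Vvec a) 1 = Pi.single a 1 ∧ curry (Vvec a) 2 = 0 := by
  refine ⟨?_, ?_, ?_⟩ <;> ext b <;> simp [Vvec, Pi.single_apply]

lemma curry_Tvec (a : Fin s) :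
    curry (Tvec a) 0 = 0 ∧ curry (Tvec a) 1 = 0 ∧ curry (Tvec a) 2 = Pi.single a 1 := by
  refine ⟨?_, ?_, ?_⟩ <;> ext b <;> simp [Tvec, Pi.single_apply]

lemma gBil_eq (gm : Fin s → Fin s → ℝ) (x y : BasisIdx s → ℝ) :
    gBil gm x y = curry x 0 ⬝ᵥ (of gm *ᵥ curry y 0) + curry x 0 ⬝ᵥ curry y 1
      + curry x 1 ⬝ᵥ curry y 0 - curry x 2 ⬝ᵥ curry y 2 := by
  simp only [gBil, Fintype.sum_prod_type, Fin.sum_univ_three]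
  simp only [Gmat, Fin.isValue, and_self, ↓reduceIte, one_ne_zero, zero_ne_one, Fin.reduceEq,
    and_false, and_true, or_false, or_true, or_self, mul_assoc, mul_ite, ite_mul, mul_one, mul_zero,
    zero_mul, neg_mul, mul_neg, Finset.sum_ite_eq, Finset.mem_univ, Finset.sum_const_zero, add_zero,
    zero_add, Finset.sum_add_distrib, Finset.sum_neg_distrib, dotProduct, curry_apply,
    Matrix.mulVec, Matrix.of_apply, Finset.mul_sum]
  ring

lemma gBil_Uvec (gm : Fin s → Fin s → ℝ) (w : BasisIdx s → ℝ) (d : Fin s) :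
    gBil gm w (Uvec d) = ∑ b, w (0, b) * gm b d + w (1, d) := by
  simp only [gBil_eq, curry_Uvec]
  simp [Matrix.mulVec, dotProduct, Pi.single_apply]

lemma gBil_Vvec (gm : Fin s → Fin s → ℝ) (w : BasisIdx s → ℝ) (d : Fin s) :
    gBil gm w (Vvec d) = w (0, d) := by
  simp [gBil_eq, curry_Vvec]

lemma gBil_Tvec (gm : Fin s → Fin s → ℝ) (w : BasisIdx s → ℝ) (d : Fin s) :
    gBil gm w (Tvec d) = -w (2, d) := by
  simp [gBil_eq, curry_Tvec]

lemma curry_zero_ne_zero_of_gBil_self_pos {gm : Fin s → Fin s → ℝ} {x : BasisIdx s → ℝ}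
    (h : 0 < gBil gm x x) : curry x 0 ≠ 0 := by
  intro hu
  rw [gBil_eq, hu] at h
  have : 0 ≤ curry x 2 ⬝ᵥ curry x 2 := Finset.sum_nonneg fun _ _ => mul_self_nonneg _
  simp only [Matrix.mulVec_zero, dotProduct_zero, zero_dotProduct, add_zero, zero_sub,
    Left.neg_pos_iff] at h
  linarith

def form4 (F : Fin s → Fin s → Fin s → Fin s → ℝ) (a b c d : Fin s → ℝ) : ℝ :=
  ∑ i, ∑ j, ∑ k, ∑ l, a i * b j * c k * d l * F i j k l

lemma form4_zero_right (F : Fin s → Fin s → Fin s → Fin s → ℝ) (a b c : Fin s → ℝ) :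
    form4 F a b c 0 = 0 := by
  simp [form4]

lemma form4_self_left {F : Fin s → Fin s → Fin s → Fin s → ℝ}
    (hF : ∀ i j k l, F i j k l = -F j i k l) (a c d : Fin s → ℝ) : form4 F a a c d = 0 := by
  have h : form4 F a a c d = -form4 F a a c d := by
    unfold form4
    conv_lhs => rw [Finset.sum_comm]
    simp only [← Finset.sum_neg_distrib]
    refine Finset.sum_congr rfl fun i _ => Finset.sum_congr rfl fun j _ =>
      Finset.sum_congr rfl fun k _ => Finset.sum_congr rfl fun l _ => ?_
    rw [hF j i k l]
    ring
  linarith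

lemma form4_R2const (a b c d : Fin s → ℝ) :
    form4 (R2const s) a b c d = (a ⬝ᵥ d) * (b ⬝ᵥ c) - (a ⬝ᵥ c) * (b ⬝ᵥ d) := by
  simp only [form4, R2const, mul_ite, mul_one, mul_zero, mul_sub, Finset.sum_sub_distrib,
    Finset.sum_ite_irrel, Finset.sum_ite_eq, Finset.mem_univ, ↓reduceIte, Finset.sum_const_zero,
    dotProduct, Finset.mul_sum, Finset.sum_mul]
  congr 1 <;> rw [Finset.sum_comm] <;>
    exact Finset.sum_congr rfl fun _ _ => Finset.sum_congr rfl fun _ _ => by ring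

lemma ext_bigR (R1 R2 : Fin s → Fin s → Fin s → Fin s → ℝ) (x y z w : BasisIdx s → ℝ) :
    ext (bigR R1 R2) x y z w = form4 R1 (curry x 0) (curry y 0) (curry z 0) (curry w 0)
      + form4 R2 (curry x 2) (curry y 0) (curry z 0) (curry w 0)
      + form4 R2 (curry x 0) (curry y 2) (curry z 0) (curry w 0)
      + form4 R2 (curry x 0) (curry y 0) (curry z 2) (curry w 0)
      + form4 R2 (curry x 0) (curry y 0) (curry z 0) (curry w 2) := by
  simp only [_root_.ext, form4, Fintype.sum_prod_type, Fin.sum_univ_three]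
  simp only [bigR, Fin.isValue, and_self, ↓reduceIte, one_ne_zero, Fin.reduceEq, and_false,
    and_true, or_false, or_true, or_self, mul_zero, Finset.sum_const_zero, add_zero,
    Finset.sum_add_distrib, curry_apply]
  ring

lemma ext_bigR_Vvec (R1 R2 : Fin s → Fin s → Fin s → Fin s → ℝ) (x y z : BasisIdx s → ℝ)
    (d : Fin s) : ext (bigR R1 R2) x y z (Vvec d) = 0 := by
  simp [ext_bigR, curry_Vvec, form4_zero_right]

lemma ext_bigR_Tvec (R1 R2 : Fin s → Fin s → Fin s → Fin s → ℝ) (x y z : BasisIdx s → ℝ)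
    (d : Fin s) :
    ext (bigR R1 R2) x y z (Tvec d) =
      form4 R2 (curry x 0) (curry y 0) (curry z 0) (Pi.single d 1) := by
  simp [ext_bigR, curry_Tvec, form4_zero_right]

lemma ext_bigR_Uvec (R1 R2 : Fin s → Fin s → Fin s → Fin s → ℝ) (x y z : BasisIdx s → ℝ)
    (d : Fin s) :
    ext (bigR R1 R2) x y z (Uvec d) = form4 R1 (curry x 0) (curry y 0) (curry z 0) (Pi.single d 1)
      + form4 R2 (curry x 2) (curry y 0) (curry z 0) (Pi.single d 1)
      + form4 R2 (curry x 0) (curry y 2) (curry z 0) (Pi.single d 1)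
      + form4 R2 (curry x 0) (curry y 0) (curry z 2) (Pi.single d 1) := by
  simp [ext_bigR, curry_Uvec, form4_zero_right]

def perpMatrix (u : Fin s → ℝ) : Matrix (Fin s) (Fin s) ℝ := (u ⬝ᵥ u) • 1 - vecMulVec u u

lemma vecMul_perpMatrix (u z : Fin s → ℝ) :
    z ᵥ* perpMatrix u = (u ⬝ᵥ u) • z - (z ⬝ᵥ u) • u := by
  simp [perpMatrix, Matrix.vecMul_sub, Matrix.vecMul_smul, Matrix.vecMul_vecMulVec]

lemma vecMul_perpMatrix_self (u : Fin s → ℝ) : u ᵥ* perpMatrix u = 0 := by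
  simp [vecMul_perpMatrix]

lemma vecMul_perpMatrix_vecMul_perpMatrix (u z : Fin s → ℝ) :
    z ᵥ* perpMatrix u ᵥ* perpMatrix u = (u ⬝ᵥ u) • (z ᵥ* perpMatrix u) := by
  conv_lhs => rw [vecMul_perpMatrix u z]
  rw [Matrix.sub_vecMul, Matrix.smul_vecMul, Matrix.smul_vecMul, vecMul_perpMatrix_self,
    smul_zero, sub_zero]

lemma ker_perpMatrix {u : Fin s → ℝ} (hu : u ≠ 0) :
    ker (perpMatrix u).vecMulLinear = span ℝ {u} := by
  have huu : u ⬝ᵥ u ≠ 0 := dotProduct_self_eq_zero.not.2 hu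
  ext z
  rw [mem_ker, Matrix.vecMulLinear_apply, mem_span_singleton]
  constructor
  · intro h
    refine ⟨(z ⬝ᵥ u) / (u ⬝ᵥ u), ?_⟩
    rw [vecMul_perpMatrix, sub_eq_zero] at h
    rw [div_eq_inv_mul, mul_smul, ← h, smul_smul, inv_mul_cancel₀ huu, one_smul]
  · rintro ⟨a, rfl⟩
    rw [Matrix.smul_vecMul, vecMul_perpMatrix_self, smul_zero]

lemma finrank_range_perpMatrix {u : Fin s → ℝ} (hu : u ≠ 0) :
    finrank ℝ (range (perpMatrix u).vecMulLinear) = s - 1 := by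
  have h := finrank_range_add_finrank_ker (perpMatrix u).vecMulLinear
  rw [ker_perpMatrix hu, finrank_span_singleton hu, finrank_fin_fun] at h
  omega

/-- The `U → V` block of the Jacobi operator; its `T → V` block is `perpMatrix u`. -/
def jacobiBlock (R1 : Fin s → Fin s → Fin s → Fin s → ℝ) (u t : Fin s → ℝ) :
    Matrix (Fin s) (Fin s) ℝ :=
  of (fun c d => ∑ b, ∑ e, u b * u e * R1 c b e d) + (2 * (u ⬝ᵥ t)) • 1
    - vecMulVec u t - vecMulVec t u

lemma vecMul_jacobiBlock (R1 : Fin s → Fin s → Fin s → Fin s → ℝ) (u t z : Fin s → ℝ) :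
    z ᵥ* jacobiBlock R1 u t = (fun d => form4 R1 z u u (Pi.single d 1)) + (2 * (u ⬝ᵥ t)) • z
      - (z ⬝ᵥ u) • t - (z ⬝ᵥ t) • u := by
  simp only [jacobiBlock, Matrix.vecMul_sub, Matrix.vecMul_add, Matrix.vecMul_smul,
    Matrix.vecMul_one, Matrix.vecMul_vecMulVec]
  congr 3
  ext d
  simp [form4, Matrix.vecMul, dotProduct, Pi.single_apply, Finset.mul_sum, mul_assoc]

lemma vecMul_jacobiBlock_add_vecMul_perpMatrix {R1 : Fin s → Fin s → Fin s → Fin s → ℝ}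
    (hR1 : ∀ i j k l, R1 i j k l = -R1 j i k l) (u t : Fin s → ℝ) :
    u ᵥ* jacobiBlock R1 u t + t ᵥ* perpMatrix u = 0 := by
  ext d
  simp only [vecMul_jacobiBlock, form4_self_left hR1, vecMul_perpMatrix, dotProduct_comm t u,
    Pi.add_apply, Pi.sub_apply, Pi.smul_apply, smul_eq_mul, zero_add, Pi.zero_apply]
  ring

section Components

variable {gm : Fin s → Fin s → ℝ} {R1 : Fin s → Fin s → Fin s → Fin s → ℝ} {x y w : BasisIdx s → ℝ}

lemma apply_zero_of_gBil_eq_ext (hw : ∀ z, gBil gm w z = ext (bigR R1 (R2const s)) y x x z)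
    (d : Fin s) : w (0, d) = 0 := by
  rw [← gBil_Vvec gm w d, hw, ext_bigR_Vvec]

lemma apply_two_of_gBil_eq_ext (hw : ∀ z, gBil gm w z = ext (bigR R1 (R2const s)) y x x z)
    (d : Fin s) : w (2, d) = -(curry y 0 ᵥ* perpMatrix (curry x 0)) d := by
  have h := hw (Tvec d)
  rw [gBil_Tvec, ext_bigR_Tvec, form4_R2const] at h
  simp only [dotProduct_single, mul_one, curry_apply] at h
  simp only [vecMul_perpMatrix, Pi.sub_apply, Pi.smul_apply, curry_apply, smul_eq_mul, neg_sub]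
  linarith

lemma apply_one_of_gBil_eq_ext (hw : ∀ z, gBil gm w z = ext (bigR R1 (R2const s)) y x x z)
    (d : Fin s) :
    w (1, d) = (curry y 0 ᵥ* jacobiBlock R1 (curry x 0) (curry x 2)
      + curry y 2 ᵥ* perpMatrix (curry x 0)) d := by
  have h := hw (Uvec d)
  simp only [gBil_Uvec, apply_zero_of_gBil_eq_ext hw, zero_mul, Finset.sum_const_zero, zero_add,
    ext_bigR_Uvec, form4_R2const, dotProduct_single, mul_one] at h
  simp only [h, curry_apply, dotProduct_comm, vecMul_jacobiBlock, vecMul_perpMatrix, Pi.add_apply,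
    Pi.sub_apply, Pi.smul_apply, smul_eq_mul]
  ring

end Components

def splitUT : (BasisIdx s → ℝ) →ₗ[ℝ] (Fin s → ℝ) × (Fin s → ℝ) :=
  (funLeft ℝ ℝ (Prod.mk 0)).prod (funLeft ℝ ℝ (Prod.mk 2))

lemma splitUT_apply (y : BasisIdx s → ℝ) : splitUT y = (curry y 0, curry y 2) := rfl

lemma splitUT_surjective : Surjective (splitUT (s := s)) := by
  intro v
  refine ⟨fun p => ![v.1 p.2, 0, v.2 p.2] p.1, ?_⟩
  ext d <;> simp [splitUT]

def embedVT : (Fin s → ℝ) × (Fin s → ℝ) →ₗ[ℝ] (BasisIdx s → ℝ) :=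
  LinearMap.pi fun p => ![0, proj p.2 ∘ₗ fst ℝ _ _, proj p.2 ∘ₗ snd ℝ _ _] p.1

lemma embedVT_injective : Injective (embedVT (s := s)) := by
  intro v w h
  ext d
  · simpa [embedVT] using congrFun h (1, d)
  · simpa [embedVT] using congrFun h (2, d)

lemma splitUT_embedVT (v : (Fin s → ℝ) × (Fin s → ℝ)) : splitUT (embedVT v) = (0, v.2) := by
  ext d <;> simp [splitUT, embedVT]

def blockMap (A P : Matrix (Fin s) (Fin s) ℝ) :
    (Fin s → ℝ) × (Fin s → ℝ) →ₗ[ℝ] (Fin s → ℝ) × (Fin s → ℝ) :=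
  (A.vecMulLinear.coprod P.vecMulLinear).prod (-(P.vecMulLinear ∘ₗ fst ℝ _ _))

lemma blockMap_apply (A P : Matrix (Fin s) (Fin s) ℝ) (v : (Fin s → ℝ) × (Fin s → ℝ)) :
    blockMap A P v = (v.1 ᵥ* A + v.2 ᵥ* P, -(v.1 ᵥ* P)) := rfl

lemma ker_blockMap {A P : Matrix (Fin s) (Fin s) ℝ} {u t : Fin s → ℝ}
    (hP : ker P.vecMulLinear = span ℝ {u}) (hAP : u ᵥ* A + t ᵥ* P = 0) :
    ker (blockMap A P) = span ℝ {(0, u), (u, t)} := by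
  have huP : u ᵥ* P = 0 := by
    rw [← Matrix.vecMulLinear_apply, ← mem_ker, hP]
    exact mem_span_singleton_self u
  apply le_antisymm
  · rintro ⟨z, w⟩ hzw
    rw [mem_ker, blockMap_apply, Prod.mk_eq_zero, neg_eq_zero] at hzw
    obtain ⟨hV, hT⟩ := hzw
    obtain ⟨a, rfl⟩ : ∃ a : ℝ, a • u = z := by
      rw [← mem_span_singleton, ← hP, mem_ker]
      exact hT
    obtain ⟨b, hb⟩ : ∃ b : ℝ, b • u = w - a • t := by
      rw [← mem_span_singleton, ← hP, mem_ker, Matrix.vecMulLinear_apply, Matrix.sub_vecMul,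
        Matrix.smul_vecMul, sub_eq_zero, eq_neg_of_add_eq_zero_right hV, Matrix.smul_vecMul,
        eq_neg_of_add_eq_zero_left hAP, smul_neg, neg_neg]
    rw [mem_span_pair]
    exact ⟨b, a, Prod.ext (by simp) (by simp [hb])⟩
  · rw [span_le]
    rintro _ (rfl | rfl)
    · simp [mem_ker, blockMap_apply, huP]
    · simp [mem_ker, blockMap_apply, huP, hAP]

lemma finrank_span_zero_pair {u : Fin s → ℝ} (hu : u ≠ 0) (t : Fin s → ℝ) :
    finrank ℝ (span ℝ {((0 : Fin s → ℝ), u), (u, t)}) = 2 := by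
  have hli : LinearIndependent ℝ ![((0 : Fin s → ℝ), u), (u, t)] := by
    rw [LinearIndependent.pair_iff' (by simpa using hu)]
    intro a h
    exact hu (by simpa using (congrArg Prod.fst h).symm)
  rw [← Matrix.range_cons_cons_empty, finrank_span_eq_card hli, Fintype.card_fin]

lemma finrank_range_blockMap {A P : Matrix (Fin s) (Fin s) ℝ} {u t : Fin s → ℝ} (hu : u ≠ 0)
    (hP : ker P.vecMulLinear = span ℝ {u}) (hAP : u ᵥ* A + t ᵥ* P = 0) :
    finrank ℝ (range (blockMap A P)) = 2 * (s - 1) := by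
  have h := finrank_range_add_finrank_ker (blockMap A P)
  rw [ker_blockMap hP hAP, finrank_span_zero_pair hu, finrank_prod, finrank_fin_fun] at h
  omega

lemma finrank_range_comp_comp {K M M' N N' : Type*} [DivisionRing K] [AddCommGroup M]
    [Module K M] [AddCommGroup M'] [Module K M'] [AddCommGroup N] [Module K N]
    [AddCommGroup N'] [Module K N'] {f : N →ₗ[K] N'} (hf : Injective f) (φ : M →ₗ[K] N)
    {g : M' →ₗ[K] M} (hg : Surjective g) :
    finrank K (range (f ∘ₗ φ ∘ₗ g)) = finrank K (range φ) := by
  rw [range_comp, range_comp_of_range_eq_top φ (range_eq_top.2 hg)]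
  exact ((range φ).equivMapOfInjective f hf).finrank_eq.symm

section Jacobi

variable {gm : Fin s → Fin s → ℝ} {R1 : Fin s → Fin s → Fin s → Fin s → ℝ}
  {X : BasisIdx s → ℝ} {J : Module.End ℝ (BasisIdx s → ℝ)}

lemma jacobi_eq (hJ : ∀ y z, gBil gm (J y) z = ext (bigR R1 (R2const s)) y X X z) :
    J = embedVT ∘ₗ blockMap (jacobiBlock R1 (curry X 0) (curry X 2)) (perpMatrix (curry X 0))
      ∘ₗ splitUT := by
  refine LinearMap.ext fun y => funext fun ⟨i, d⟩ => ?_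
  fin_cases i
  · simp [apply_zero_of_gBil_eq_ext (hJ y), embedVT]
  · simp [apply_one_of_gBil_eq_ext (hJ y), embedVT, blockMap_apply, splitUT_apply]
  · simp [apply_two_of_gBil_eq_ext (hJ y), embedVT, blockMap_apply, splitUT_apply]

lemma jacobi_sq_eq (hJ : ∀ y z, gBil gm (J y) z = ext (bigR R1 (R2const s)) y X X z) :
    J ^ 2 = (embedVT ∘ₗ inl ℝ _ _) ∘ₗ
      ((-(curry X 0 ⬝ᵥ curry X 0)) • (perpMatrix (curry X 0)).vecMulLinear) ∘ₗ
      (fst ℝ _ _ ∘ₗ splitUT) := by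
  rw [sq, Module.End.mul_eq_comp, jacobi_eq hJ]
  refine LinearMap.ext fun y => ?_
  simp only [LinearMap.comp_apply, blockMap_apply, splitUT_embedVT, Matrix.neg_vecMul,
    vecMul_perpMatrix_vecMul_perpMatrix]
  simp [splitUT_apply]

end Jacobi

end JacobiOperator

open JacobiOperator Function

theorem stmt7_general (s : ℕ) (gm : Fin s → Fin s → ℝ)
    (R1 : Fin s → Fin s → Fin s → Fin s → ℝ) (h1 : IsACT R1)
    (X : BasisIdx s → ℝ) (hX : gBil gm X X = 1)
    (J : Module.End ℝ (BasisIdx s → ℝ))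
    (hJ : ∀ y z, gBil gm (J y) z = ext (bigR R1 (R2const s)) y X X z) :
    J X = 0 ∧ (∀ a : Fin s, J (Vvec a) = 0) ∧
    Module.finrank ℝ (LinearMap.range J) = 2 * (s - 1) ∧
    Module.finrank ℝ (LinearMap.range (J ^ 2)) = s - 1 := by
  have hu : curry X 0 ≠ 0 := curry_zero_ne_zero_of_gBil_self_pos (hX ▸ one_pos)
  have hcompat := vecMul_jacobiBlock_add_vecMul_perpMatrix h1.1 (curry X 0) (curry X 2)
  refine ⟨?_, fun a => ?_, ?_, ?_⟩
  · rw [jacobi_eq hJ]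
    simp [splitUT_apply, blockMap_apply, hcompat, vecMul_perpMatrix_self, Prod.mk_zero_zero]
  · rw [jacobi_eq hJ]
    simp [splitUT_apply, curry_Vvec, Prod.mk_zero_zero]
  · rw [jacobi_eq hJ, finrank_range_comp_comp embedVT_injective _ splitUT_surjective]
    exact finrank_range_blockMap hu (ker_perpMatrix hu) hcompat
  · rw [jacobi_sq_eq hJ, finrank_range_comp_comp (f := embedVT ∘ₗ LinearMap.inl ℝ _ _)
      (embedVT_injective.comp LinearMap.inl_injective) _
      (g := LinearMap.fst ℝ _ _ ∘ₗ splitUT) (Prod.fst_surjective.comp splitUT_surjective),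
      LinearMap.range_smul _ _ (neg_ne_zero.2 (dotProduct_self_eq_zero.not.2 hu))]
    exact finrank_range_perpMatrix hu

/-- for any unit spacelike `X`, the Jacobi operator of the tensor
of Lemma 2.1 (with `R¹` arbitrary and `R²` of constant curvature `+1`)
satisfies `J(X)X = 0`, `J(X)V_a = 0` for all `a`, `rank J(X) = 2(s-1)` and
`rank J(X)² = s-1`, independent of `X` (the image of `J(X)²` is an
`(s-1)`-dimensional span of `V`-vectors). -/
theorem stmt7 (s : ℕ) (hs : 2 ≤ s) (gm : Fin s → Fin s → ℝ)
    (hgm : ∀ a b, gm a b = gm b a)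
    (R1 : Fin s → Fin s → Fin s → Fin s → ℝ) (h1 : IsACT R1)
    (X : BasisIdx s → ℝ) (hX : gBil gm X X = 1)
    (J : Module.End ℝ (BasisIdx s → ℝ))
    (hJ : ∀ y z, gBil gm (J y) z = ext (bigR R1 (R2const s)) y X X z) :
    J X = 0 ∧ (∀ a : Fin s, J (Vvec a) = 0) ∧
    Module.finrank ℝ (LinearMap.range J) = 2 * (s - 1) ∧
    Module.finrank ℝ (LinearMap.range (J ^ 2)) = s - 1 :=
  stmt7_general s gm R1 h1 X hX J hJ
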